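/- Let m → ∞. Then J_m(·, η1, η2) converges to J_b(·, η1, η2) uniformly on ℝ; that is, for every ε > 0 there exists M ∈ ℕ such that for all m ≥ M and all x ∈ ℝ, |J_m(x, η1, η2) − J_b(x, η1, η2)| < ε. -/

import Mathlib

/-!
Cut `[η1, η2]` into `3m` cells of width `h = (η2 - η1) / (3m)` and let `T i` be the integral of
`y ↦ W (x - y)` over the `i`-th cell. `J_m` keeps the last cell of every block of three with weight
`κ`, `J_b` keeps all cells with weight `κ / 3`, so
`J_m - J_b = (κ / 3) Σ_j ((T (3j+2) - T (3j)) + (T (3j+2) - T (3j+1)))`,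
and each bracket compares integrals over translates by at most `2h`. A continuous periodic `W` is
uniformly continuous, so once `2h` is below its modulus of continuity for `ε` every bracket is at
most `2εh`, uniformly in `x`; the `m` blocks then give `|J_m - J_b| ≤ 2 |κ| |η2 - η1| ε / 9`.
-/

open MeasureTheory Filter

/-- The mesoscopic synaptic profile of the `m`-strip microscopic bump:
`J_m(x, η1, η2) = κ · Σ_{j=1}^{m} ∫_{A^m_{3j}} W(x − y) dy`, where
`A^m_i = [η1 + (i−1)(η2−η1)/(3m), η1 + i(η2−η1)/(3m))`. -/
noncomputable def Jm (W : ℝ → ℝ) (κ η1 η2 : ℝ) (m : ℕ) (x : ℝ) : ℝ :=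
  κ * ∑ j ∈ Finset.range m,
    ∫ y in (η1 + (3 * (j : ℝ) + 2) * (η2 - η1) / (3 * (m : ℝ)))..(
            η1 + (3 * (j : ℝ) + 3) * (η2 - η1) / (3 * (m : ℝ))), W (x - y)

/-- The limiting mesoscopic bump profile `J_b(x, η1, η2) = (κ/3) ∫_{η1}^{η2} W(x−y) dy`. -/
noncomputable def Jb (W : ℝ → ℝ) (κ η1 η2 : ℝ) (x : ℝ) : ℝ :=
  (κ / 3) * ∫ y in η1..η2, W (x - y)

theorem Function.Periodic.uniformContinuous_of_continuous {f : ℝ → ℝ} {c : ℝ} (hc : 0 < c)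
    (hp : Function.Periodic f c) (hf : Continuous f) : UniformContinuous f := by
  have : Fact (0 < c) := ⟨hc⟩
  have hlift : Continuous (hp.lift : AddCircle c → ℝ) := hf.quotient_lift _
  have hmk : UniformContinuous (QuotientAddGroup.mk : ℝ → AddCircle c) :=
    uniformContinuous_of_continuousAt_zero (QuotientAddGroup.mk' _)
      continuous_quotient_mk'.continuousAt
  exact (CompactSpace.uniformContinuous_of_continuous hlift).comp hmk

section

variable {f : ℝ → ℝ} {ε : ℝ}

theorem abs_integral_comp_add_right_sub_le (hf : Continuous f) (a b t : ℝ)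
    (hε : ∀ y, |f (y + t) - f y| ≤ ε) :
    |(∫ y in (a + t)..(b + t), f y) - ∫ y in a..b, f y| ≤ ε * |b - a| := by
  rw [← intervalIntegral.integral_comp_add_right, ← intervalIntegral.integral_sub
    ((by fun_prop : Continuous fun y => f (y + t)).intervalIntegrable a b)
    (hf.intervalIntegrable a b)]
  exact intervalIntegral.norm_integral_le_of_norm_le_const (f := fun y => f (y + t) - f y)
    fun y _ => hε y

theorem abs_three_mul_integral_last_third_sub_le (hf : Continuous f) (a h : ℝ)
    (hε : ∀ u v, |u - v| ≤ 2 * |h| → |f u - f v| ≤ ε) :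
    |3 * (∫ y in (a + 2 * h)..(a + 3 * h), f y) - ∫ y in a..(a + 3 * h), f y|
      ≤ 2 * ε * |h| := by
  have hint : ∀ u v, IntervalIntegrable f volume u v := hf.intervalIntegrable
  have hshift : ∀ t, |t| ≤ 2 * |h| → ∀ y, |f (y + t) - f y| ≤ ε := fun t ht y =>
    hε _ _ (by rwa [add_sub_cancel_left])
  have h₀ := abs_integral_comp_add_right_sub_le hf a (a + h) (2 * h)
    (hshift _ (by rw [abs_mul, abs_two]))
  have h₁ := abs_integral_comp_add_right_sub_le hf (a + h) (a + 2 * h) h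
    (hshift _ (by linarith [abs_nonneg h]))
  rw [show a + h + 2 * h = a + 3 * h by ring, add_sub_cancel_left] at h₀
  rw [show a + h + h = a + 2 * h by ring, show a + 2 * h + h = a + 3 * h by ring,
    show a + 2 * h - (a + h) = h by ring] at h₁
  rw [← intervalIntegral.integral_add_adjacent_intervals (hint a (a + 2 * h)) (hint _ _),
    ← intervalIntegral.integral_add_adjacent_intervals (hint a (a + h)) (hint _ _)]
  calc _ = |((∫ y in (a + 2 * h)..(a + 3 * h), f y) - ∫ y in a..(a + h), f y) +
          ((∫ y in (a + 2 * h)..(a + 3 * h), f y) - ∫ y in (a + h)..(a + 2 * h), f y)| := by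
        congr 1; ring
    _ ≤ _ := (abs_add_le _ _).trans (by linarith)

theorem abs_three_mul_sum_integral_sub_le (hf : Continuous f) (a h : ℝ)
    (hε : ∀ u v, |u - v| ≤ 2 * |h| → |f u - f v| ≤ ε) (m : ℕ) :
    |3 * ∑ j ∈ Finset.range m, (∫ y in (a + (3 * j + 2) * h)..(a + (3 * j + 3) * h), f y)
      - ∫ y in a..(a + 3 * m * h), f y| ≤ 2 * m * ε * |h| := by
  induction m with
  | zero => simp
  | succ m ih =>
    set b := a + 3 * m * h
    have hblock := abs_three_mul_integral_last_third_sub_le hf b h hε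
    have e₂ : a + (3 * (m : ℝ) + 2) * h = b + 2 * h := by ring
    have e₃ : a + (3 * (m : ℝ) + 3) * h = b + 3 * h := by ring
    have e₃' : a + 3 * ((m + 1 : ℕ) : ℝ) * h = b + 3 * h := by push_cast; ring
    rw [Finset.sum_range_succ, e₂, e₃, e₃', ← intervalIntegral.integral_add_adjacent_intervals
      (hf.intervalIntegrable a b) (hf.intervalIntegrable _ _)]
    push_cast
    calc _ = |(3 * ∑ j ∈ Finset.range m,
              (∫ y in (a + (3 * j + 2) * h)..(a + (3 * j + 3) * h), f y)
            - ∫ y in a..b, f y)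
          + (3 * (∫ y in (b + 2 * h)..(b + 3 * h), f y) - ∫ y in b..(b + 3 * h), f y)| := by
          congr 1; ring
      _ ≤ _ := (abs_add_le _ _).trans (by linarith)

end

theorem abs_Jm_sub_Jb_le {W : ℝ → ℝ} (hW : Continuous W) (κ η1 η2 : ℝ) {ε : ℝ} {m : ℕ}
    (hm : m ≠ 0) (hε : ∀ u v, |u - v| ≤ 2 * |(η2 - η1) / (3 * m)| → |W u - W v| ≤ ε)
    (x : ℝ) : |Jm W κ η1 η2 m x - Jb W κ η1 η2 x| ≤ 2 * |κ| * |η2 - η1| * ε / 9 := by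
  set h := (η2 - η1) / (3 * m) with hh
  have hJm : Jm W κ η1 η2 m x = κ * ∑ j ∈ Finset.range m,
      ∫ y in (η1 + (3 * j + 2) * h)..(η1 + (3 * j + 3) * h), W (x - y) := by
    simp only [Jm, hh, mul_div_assoc]
  have hη2 : η2 = η1 + 3 * m * h := by rw [hh]; field_simp; ring
  have hsum := abs_three_mul_sum_integral_sub_le (f := fun y => W (x - y)) (by fun_prop) η1 h
    (fun u v huv => by simpa [abs_sub_comm] using hε (x - u) (x - v) (by simpa [abs_sub_comm]))
    m
  have habs_h : |h| = |η2 - η1| / (3 * m) := by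
    rw [hh, abs_div, abs_of_pos (by positivity : (0 : ℝ) < 3 * m)]
  calc |Jm W κ η1 η2 m x - Jb W κ η1 η2 x|
      = |κ / 3| * |3 * ∑ j ∈ Finset.range m,
          (∫ y in (η1 + (3 * j + 2) * h)..(η1 + (3 * j + 3) * h), W (x - y))
          - ∫ y in η1..(η1 + 3 * m * h), W (x - y)| := by
        rw [← abs_mul, hJm, Jb, ← hη2]; congr 1; ring
    _ ≤ |κ| / 3 * (2 * m * ε * |h|) := by
        rw [abs_div, abs_of_pos (by norm_num : (0 : ℝ) < 3)]; gcongr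
    _ = 2 * |κ| * |η2 - η1| * ε / 9 := by rw [habs_h]; field_simp; ring

theorem Jm_tendstoUniformly_Jb_general
    (L : ℝ) (hL : 0 < L) (W : ℝ → ℝ) (hWcont : Continuous W)
    (hWper : Function.Periodic W (2 * L)) (κ : ℝ)
    (η1 η2 : ℝ) :
    ∀ ε > 0, ∃ M : ℕ, ∀ m ≥ M, ∀ x : ℝ,
      |Jm W κ η1 η2 m x - Jb W κ η1 η2 x| < ε := by
  intro ε hε
  set C := |κ| * |η2 - η1|
  set ε' := ε / (C + 1)
  have hC : 0 ≤ C := by positivity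
  have hε' : 2 * C * ε' / 9 < ε := by
    rw [div_lt_iff₀ (by norm_num), mul_div_assoc', div_lt_iff₀ (by positivity)]
    nlinarith
  obtain ⟨δ, hδ, hWδ⟩ := Metric.uniformContinuous_iff.1
    (hWper.uniformContinuous_of_continuous (by positivity) hWcont) ε' (by positivity)
  obtain ⟨M, hM⟩ := eventually_atTop.1 <| (eventually_ne_atTop 0).and <|
    (tendsto_const_div_atTop_nhds_zero_nat (2 * |η2 - η1| / 3)).eventually (gt_mem_nhds hδ)
  refine ⟨M, fun m hm x => lt_of_le_of_lt ?_ hε'⟩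
  obtain ⟨hm0, hmδ⟩ := hM m hm
  refine (abs_Jm_sub_Jb_le hWcont κ η1 η2 hm0 (fun u v huv => (hWδ ?_).le) x).trans_eq (by ring)
  rw [abs_div, abs_of_pos (by positivity : (0 : ℝ) < 3 * m)] at huv
  calc dist u v ≤ 2 * (|η2 - η1| / (3 * m)) := huv
    _ = 2 * |η2 - η1| / 3 / m := by ring
    _ < δ := hmδ

/-- `J_m(·, η1, η2)` converges to `J_b(·, η1, η2)` uniformly on `ℝ` as `m → ∞`. -/
theorem Jm_tendstoUniformly_Jb
    (L : ℝ) (hL : 0 < L) (W : ℝ → ℝ) (hWcont : Continuous W)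
    (hWper : Function.Periodic W (2 * L)) (κ : ℝ) (hκ : 0 < κ)
    (η1 η2 : ℝ) (hη : η1 < η2) :
    ∀ ε > 0, ∃ M : ℕ, ∀ m ≥ M, ∀ x : ℝ,
      |Jm W κ η1 η2 m x - Jb W κ η1 η2 x| < ε :=
  Jm_tendstoUniformly_Jb_general L hL W hWcont hWper κ η1 η2
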